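/- arXiv:1705.05755 — 2 statements merged into one kernel-verified Lean document; each statement's English description precedes it below -/
import Mathlib

section
/- Let (M, d) be a metric space, k ≥ 1, and let r_1, …, r_t ∈ M. Let A_0, A_1, …, A_t be configurations such that A_i serves r_i for every 1 ≤ i ≤ t. Define B_0 := A_0 and B_i := A_{i-1} for 1 ≤ i ≤ t. Then the relaxed cost of B_0, …, B_t is at most three times the movement cost of A_0, …, A_t; that is, ∑_{i=1}^t D(B_{i-1}, B_i) + 2 ∑_{i=1}^t s(B_i, r_i) ≤ 3 ∑_{i=1}^t D(A_{i-1}, A_i). -/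
/-- The matching distance between two configurations of `k` servers. -/
noncomputable def matchDist {M : Type*} [MetricSpace M] {k : ℕ} (A B : Fin k → M) : ℝ :=
  ⨅ σ : Equiv.Perm (Fin k), ∑ j, dist (A j) (B (σ j))

/-- The serving distance from a configuration to a request point. -/
noncomputable def servDist {M : Type*} [MetricSpace M] {k : ℕ} (A : Fin k → M) (r : M) : ℝ :=
  ⨅ j : Fin k, dist (A j) r

/-! Moving from `B_0 = B_1 = A_0` and then along `A_0, …, A_{t-1}` costs no more than moving
along `A`, and `B_i = A_{i-1}` is within `D(A_{i-1}, A_i)` of the request `r_i ∈ A_i`;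
so movement plus twice the serving distance is at most three times the movement of `A`. -/

section Configurations

variable {M : Type*} [MetricSpace M] {k : ℕ}

lemma matchDist_nonneg (A B : Fin k → M) : 0 ≤ matchDist A B :=
  le_ciInf fun _ => Finset.sum_nonneg fun _ _ => dist_nonneg

lemma matchDist_le_sum (A B : Fin k → M) (σ : Equiv.Perm (Fin k)) :
    matchDist A B ≤ ∑ j, dist (A j) (B (σ j)) :=
  ciInf_le ⟨0, by rintro _ ⟨τ, rfl⟩; exact Finset.sum_nonneg fun _ _ => dist_nonneg⟩ σ

lemma matchDist_self (A : Fin k → M) : matchDist A A = 0 :=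
  le_antisymm (by simpa using matchDist_le_sum A A 1) (matchDist_nonneg A A)

lemma servDist_le_dist (A : Fin k → M) (r : M) (j : Fin k) : servDist A r ≤ dist (A j) r :=
  ciInf_le ⟨0, by rintro _ ⟨i, rfl⟩; exact dist_nonneg⟩ j

lemma servDist_le_matchDist (A C : Fin k → M) (j : Fin k) : servDist A (C j) ≤ matchDist A C := by
  refine le_ciInf fun σ => ?_
  calc servDist A (C j) ≤ dist (A (σ.symm j)) (C (σ (σ.symm j))) := by
        simpa using servDist_le_dist A (C j) (σ.symm j)
    _ ≤ ∑ i, dist (A i) (C (σ i)) :=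
        Finset.single_le_sum (f := fun i => dist (A i) (C (σ i)))
          (fun _ _ => dist_nonneg) (Finset.mem_univ _)

end Configurations

lemma sum_cost_shift_le {α : Type*} {t : ℕ} (c : α → α → ℝ) (hc_self : ∀ a, c a a = 0)
    (hc_nonneg : ∀ a b, 0 ≤ c a b) (A B : Fin (t + 1) → α) (hB0 : B 0 = A 0)
    (hB : ∀ i : Fin t, B i.succ = A i.castSucc) :
    ∑ i : Fin t, c (B i.castSucc) (B i.succ) ≤ ∑ i : Fin t, c (A i.castSucc) (A i.succ) := by
  cases t with
  | zero => simp
  | succ s =>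
    have hfirst : c (B 0) (B 1) = 0 := by
      rw [hB0, show (1 : Fin (s + 2)) = (0 : Fin (s + 1)).succ from rfl, hB 0]
      exact hc_self _
    have hrest : ∀ i : Fin s, c (B i.succ.castSucc) (B i.succ.succ)
        = c (A i.castSucc.castSucc) (A i.castSucc.succ) := fun i => by
      rw [← Fin.succ_castSucc, hB, hB, Fin.succ_castSucc]
    rw [Fin.sum_univ_succ, Fin.sum_univ_castSucc]
    simp only [Fin.castSucc_zero, Fin.succ_zero_eq_one, hfirst, hrest, zero_add]
    linarith [hc_nonneg (A (Fin.last s).castSucc) (A (Fin.last s).succ)]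

theorem relaxedCost_shift_le_three_mul_general {M : Type*} [MetricSpace M] {k t : ℕ}
    (r : Fin t → M) (A B : Fin (t + 1) → Fin k → M)
    (hA : ∀ i : Fin t, ∃ j, r i = A i.succ j)
    (hB0 : B 0 = A 0)
    (hB : ∀ i : Fin t, B i.succ = A i.castSucc) :
    ∑ i : Fin t, matchDist (B i.castSucc) (B i.succ) +
        2 * ∑ i : Fin t, servDist (B i.succ) (r i) ≤
      3 * ∑ i : Fin t, matchDist (A i.castSucc) (A i.succ) := by
  have hmove := sum_cost_shift_le matchDist matchDist_self matchDist_nonneg A B hB0 hB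
  have hserv : ∑ i : Fin t, servDist (B i.succ) (r i)
      ≤ ∑ i : Fin t, matchDist (A i.castSucc) (A i.succ) :=
    Finset.sum_le_sum fun i _ => by
      obtain ⟨j, hj⟩ := hA i
      rw [hB i, hj]
      exact servDist_le_matchDist _ _ j
  linarith

/-- if `A_0, …, A_t` is valid for `r_1, …, r_t` and `B_0 := A_0`,
`B_i := A_{i-1}` for `1 ≤ i ≤ t`, then the relaxed cost of `B` is at most three
times the movement cost of `A`. -/
theorem relaxedCost_shift_le_three_mul {M : Type*} [MetricSpace M] {k t : ℕ} (hk : 1 ≤ k)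
    (r : Fin t → M) (A B : Fin (t + 1) → Fin k → M)
    (hA : ∀ i : Fin t, ∃ j, r i = A i.succ j)
    (hB0 : B 0 = A 0)
    (hB : ∀ i : Fin t, B i.succ = A i.castSucc) :
    ∑ i : Fin t, matchDist (B i.castSucc) (B i.succ) +
        2 * ∑ i : Fin t, servDist (B i.succ) (r i) ≤
      3 * ∑ i : Fin t, matchDist (A i.castSucc) (A i.succ) :=
  relaxedCost_shift_le_three_mul_general r A B hA hB0 hB
end

section
/- Let k ≥ 1, let μ_0, μ_1, …, μ_t be fractional configurations of mass k on the line, and let r_1, …, r_t ∈ ℝ satisfy μ_i(r_i) ≥ 1 for every 1 ≤ i ≤ t. Then there exists ω ∈ (0, 1] such that for every 1 ≤ i ≤ t the rounded configuration I_ω(μ_i) contains a server at r_i, and ∑_{i=1}^t D(I_ω(μ_{i-1}), I_ω(μ_i)) ≤ ∑_{i=1}^t W(μ_{i-1}, μ_i); that is, the randomized rounding can be derandomized to an integral solution whose cost does not exceed the fractional cost. -/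
/-!
Matching the servers of `I_ω(μ)` and `I_ω(ν)` index by index and integrating over `ω ∈ (0, 1]`
gives at most `∫₀ᵏ |f_μ - f_ν|`. Since `f_μ(y) ≤ x ↔ y ≤ F_μ(x)`, Tonelli applied to the region
between the two graphs turns this into `∫ |F_μ - F_ν|`, and for every coupling `π` the difference
`F_μ(x) - F_ν(x)` is the net mass `π` carries across `x`, so `∫ |F_μ - F_ν| ≤ ∑ π(x, y) |x - y|`.
Hence the total rounded cost has average at most the fractional cost, and some `ω` does no worse
than the average. Every `ω ∈ (0, 1]` serves the requests: if `μ(r) ≥ 1`, the window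
`(F_μ(r) - μ(r), F_μ(r)]`, on which `f_μ = r`, has length at least one and so contains some
`ω + j`.
-/

open MeasureTheory

/-- The cumulative mass function `F_μ(x) = ∑_{y ≤ x} μ(y)` of a finitely
supported mass function `μ` on the line. -/
noncomputable def cumMass (μ : ℝ →₀ ℝ) (x : ℝ) : ℝ :=
  ∑ y ∈ μ.support.filter (fun y => y ≤ x), μ y

/-- The quantile function `f_μ(y)`: the least point of the support of `μ` whose
cumulative mass is at least `y`. -/
noncomputable def quantile (μ : ℝ →₀ ℝ) (y : ℝ) : ℝ :=
  sInf {x | x ∈ μ.support ∧ y ≤ cumMass μ x}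

/-- The rounded configuration `I_ω(μ) = (f_μ(ω + j))_{j < k}`. -/
noncomputable def roundCfg (k : ℕ) (μ : ℝ →₀ ℝ) (ω : ℝ) : Fin k → ℝ :=
  fun j => quantile μ (ω + (j : ℕ))

/-- The matching distance between two `k`-tuples of reals. -/
noncomputable def matchDistR {k : ℕ} (a b : Fin k → ℝ) : ℝ :=
  ⨅ σ : Equiv.Perm (Fin k), ∑ j, |a j - b (σ j)|

/-- The transport cost between two finitely supported mass functions on the
line: the infimum over finitely supported nonnegative couplings `π` with
marginals `μ` and `ν` of `∑_{x,y} π(x,y)·|x−y|`. -/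
noncomputable def transportCost (μ ν : ℝ →₀ ℝ) : ℝ :=
  sInf {c | ∃ π : ℝ × ℝ →₀ ℝ, (∀ p, 0 ≤ π p) ∧
    (∀ x, ∑ p ∈ π.support.filter (fun p => p.1 = x), π p = μ x) ∧
    (∀ y, ∑ p ∈ π.support.filter (fun p => p.2 = y), π p = ν y) ∧
    c = ∑ p ∈ π.support, π p * |p.1 - p.2|}

open Set
open scoped symmDiff ENNReal

section Quantile

variable {μ : ℝ →₀ ℝ}

lemma cumMass_mono (h0 : ∀ x, 0 ≤ μ x) : Monotone (cumMass μ) := fun _ _ h =>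
  Finset.sum_le_sum_of_subset_of_nonneg
    (Finset.monotone_filter_right _ fun _ _ hy => hy.trans h) fun y _ _ => h0 y

lemma cumMass_nonneg (h0 : ∀ x, 0 ≤ μ x) (x : ℝ) : 0 ≤ cumMass μ x :=
  Finset.sum_nonneg fun y _ => h0 y

lemma cumMass_le_sum (h0 : ∀ x, 0 ≤ μ x) (x : ℝ) : cumMass μ x ≤ ∑ y ∈ μ.support, μ y :=
  Finset.sum_le_sum_of_subset_of_nonneg (Finset.filter_subset _ _) fun y _ _ => h0 y

lemma cumMass_add_le_of_lt (h0 : ∀ x, 0 ≤ μ x) {x r : ℝ} (hr : r ∈ μ.support) (h : x < r) :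
    cumMass μ x + μ r ≤ cumMass μ r := by
  have hsub : insert r (μ.support.filter (· ≤ x)) ⊆ μ.support.filter (· ≤ r) :=
    Finset.insert_subset (Finset.mem_filter.2 ⟨hr, le_rfl⟩)
      (Finset.monotone_filter_right _ fun _ _ hy => hy.trans h.le)
  have hr' : r ∉ μ.support.filter (· ≤ x) := fun hr' => h.not_ge (Finset.mem_filter.1 hr').2
  calc cumMass μ x + μ r = ∑ y ∈ insert r (μ.support.filter (· ≤ x)), μ y := by
        rw [Finset.sum_insert hr', add_comm, cumMass]
    _ ≤ cumMass μ r := Finset.sum_le_sum_of_subset_of_nonneg hsub fun y _ _ => h0 y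

lemma quantile_eq_sInf_filter (μ : ℝ →₀ ℝ) (y : ℝ) :
    quantile μ y = sInf ↑(μ.support.filter fun x => y ≤ cumMass μ x) := by
  rw [quantile, Finset.coe_filter]

lemma quantile_le_iff (h0 : ∀ x, 0 ≤ μ x) {x y : ℝ} (hy : 0 < y)
    (hys : y ≤ ∑ z ∈ μ.support, μ z) : quantile μ y ≤ x ↔ y ≤ cumMass μ x := by
  rw [quantile_eq_sInf_filter]
  constructor
  · intro hq
    have hne : (μ.support.filter fun x => y ≤ cumMass μ x).Nonempty := by
      obtain ⟨z, hz⟩ : μ.support.Nonempty := by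
        by_contra h
        rw [Finset.not_nonempty_iff_eq_empty.1 h, Finset.sum_empty] at hys
        linarith
      refine ⟨μ.support.max' ⟨z, hz⟩, Finset.mem_filter.2 ⟨Finset.max'_mem _ _, ?_⟩⟩
      rwa [cumMass, Finset.filter_true_of_mem fun w hw => Finset.le_max' _ w hw]
    rw [hne.csInf_eq_min'] at hq
    exact (Finset.mem_filter.1 (Finset.min'_mem _ hne)).2.trans (cumMass_mono h0 hq)
  · intro hyx
    have hne : (μ.support.filter (· ≤ x)).Nonempty := by
      by_contra h
      rw [Finset.not_nonempty_iff_eq_empty] at h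
      rw [cumMass, h, Finset.sum_empty] at hyx
      linarith
    set a := (μ.support.filter (· ≤ x)).max' hne
    obtain ⟨ha, hax⟩ := Finset.mem_filter.1 (Finset.max'_mem _ hne)
    -- no mass lies in `(a, x]`, so `F_μ(a) = F_μ(x)`
    have hFa : cumMass μ a = cumMass μ x := by
      refine Finset.sum_congr (Finset.filter_congr fun z hz => ⟨fun hza => hza.trans hax,
        fun hzx => Finset.le_max' _ z (Finset.mem_filter.2 ⟨hz, hzx⟩)⟩) fun _ _ => rfl
    refine (csInf_le (Finset.bddBelow _) ?_).trans hax
    exact Finset.mem_coe.2 (Finset.mem_filter.2 ⟨ha, hFa ▸ hyx⟩)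

lemma quantile_monotoneOn (h0 : ∀ x, 0 ≤ μ x) :
    MonotoneOn (quantile μ) (Ioc 0 (∑ z ∈ μ.support, μ z)) := fun _ hy _ hy' hyy' =>
  (quantile_le_iff h0 hy.1 hy.2).2 <| hyy'.trans <| (quantile_le_iff h0 hy'.1 hy'.2).1 le_rfl

lemma quantile_eq_of_mem_Ioc (h0 : ∀ x, 0 ≤ μ x) {r y : ℝ}
    (hy : y ∈ Ioc (cumMass μ r - μ r) (cumMass μ r)) : quantile μ y = r := by
  have hr : r ∈ μ.support := Finsupp.mem_support_iff.2 fun h => by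
    rw [h, sub_zero] at hy
    exact (lt_irrefl _ (hy.1.trans_le hy.2))
  have hbelow : ∀ x < r, cumMass μ x < y := fun x hx => by
    linarith [cumMass_add_le_of_lt h0 hr hx, hy.1]
  have hy0 : 0 < y := (cumMass_nonneg h0 (r - 1)).trans_lt (hbelow _ (by linarith))
  have hys : y ≤ ∑ z ∈ μ.support, μ z := hy.2.trans (cumMass_le_sum h0 r)
  refine le_antisymm ((quantile_le_iff h0 hy0 hys).2 hy.2) (not_lt.1 fun h => ?_)
  exact (hbelow _ h).not_ge ((quantile_le_iff h0 hy0 hys).1 le_rfl)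

lemma exists_quantile_add_natCast_eq (h0 : ∀ x, 0 ≤ μ x) {k : ℕ} (hm : ∑ z ∈ μ.support, μ z = k)
    {r ω : ℝ} (hr : 1 ≤ μ r) (hω : ω ∈ Ioc 0 1) : ∃ j : Fin k, quantile μ (ω + j) = r := by
  have hrs : r ∈ μ.support := Finsupp.mem_support_iff.2 (by linarith)
  have hrc : μ r ≤ cumMass μ r := by
    linarith [cumMass_add_le_of_lt h0 hrs (sub_one_lt r), cumMass_nonneg h0 (r - 1)]
  have hck : cumMass μ r ≤ k := hm ▸ cumMass_le_sum h0 r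
  set m := ⌊cumMass μ r - ω⌋₊
  have hm_le : (m : ℝ) ≤ cumMass μ r - ω := Nat.floor_le (by linarith [hω.2])
  have hm_gt : cumMass μ r - ω < m + 1 := Nat.lt_floor_add_one _
  have hmk : m < k := by exact_mod_cast (show (m : ℝ) < k by linarith [hω.1])
  exact ⟨⟨m, hmk⟩, quantile_eq_of_mem_Ioc h0
    ⟨by simp only; linarith [hω.2], by simp only; linarith⟩⟩

end Quantile

lemma Set.Ici_symmDiff_Ici {α : Type*} [LinearOrder α] (a b : α) :
    Ici a ∆ Ici b = Ico (min a b) (max a b) := by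
  ext x
  simp only [mem_symmDiff, mem_Ici, mem_Ico, min_le_iff, lt_max_iff, not_le]
  rcases le_total a b with h | h <;> grind

lemma Set.Iic_symmDiff_Iic {α : Type*} [LinearOrder α] (a b : α) :
    Iic a ∆ Iic b = Ioc (min a b) (max a b) := by
  ext x
  simp only [mem_symmDiff, mem_Iic, mem_Ioc, le_max_iff, not_le]
  rcases le_total a b with h | h <;> grind

lemma Real.volume_Ici_symmDiff_Ici (a b : ℝ) : volume (Ici a ∆ Ici b) = ENNReal.ofReal |a - b| := by
  rw [Set.Ici_symmDiff_Ici, Real.volume_Ico, max_sub_min_eq_abs']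

lemma Real.volume_Iic_symmDiff_Iic (a b : ℝ) : volume (Iic a ∆ Iic b) = ENNReal.ofReal |a - b| := by
  rw [Set.Iic_symmDiff_Iic, Real.volume_Ioc, max_sub_min_eq_abs']

lemma lintegral_abs_quantile_sub_eq {A B : ℝ →₀ ℝ} (hA0 : ∀ x, 0 ≤ A x) (hB0 : ∀ x, 0 ≤ B x) {s : ℝ}
    (hA : ∑ z ∈ A.support, A z = s) (hB : ∑ z ∈ B.support, B z = s) :
    ∫⁻ y in Ioc 0 s, ENNReal.ofReal |quantile A y - quantile B y| =
      ∫⁻ x, ENNReal.ofReal |cumMass A x - cumMass B x| := by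
  set E : Set (ℝ × ℝ) := {p | p.1 ∈ Iic (cumMass A p.2) ∆ Iic (cumMass B p.2)}
  have hE : MeasurableSet E :=
    (measurableSet_le measurable_fst ((cumMass_mono hA0).measurable.comp measurable_snd)).symmDiff
      (measurableSet_le measurable_fst ((cumMass_mono hB0).measurable.comp measurable_snd))
  have hslice_y : ∀ y ∈ Ioc 0 s, Prod.mk y ⁻¹' E = Ici (quantile A y) ∆ Ici (quantile B y) := by
    intro y hy
    ext x
    simp only [E, mem_preimage, mem_ofPred_eq, mem_symmDiff, mem_Iic, mem_Ici,
      quantile_le_iff hA0 hy.1 (hA ▸ hy.2), quantile_le_iff hB0 hy.1 (hB ▸ hy.2)]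
  have hslice_x : ∀ x,
      (fun y => (y, x)) ⁻¹' E ∩ Ioc 0 s = Iic (cumMass A x) ∆ Iic (cumMass B x) := by
    intro x
    refine inter_eq_left.2 ?_
    change Iic (cumMass A x) ∆ Iic (cumMass B x) ⊆ Ioc 0 s
    rw [Set.Iic_symmDiff_Iic]
    exact Ioc_subset_Ioc (le_min (cumMass_nonneg hA0 x) (cumMass_nonneg hB0 x))
      (max_le (hA ▸ cumMass_le_sum hA0 x) (hB ▸ cumMass_le_sum hB0 x))
  calc ∫⁻ y in Ioc 0 s, ENNReal.ofReal |quantile A y - quantile B y|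
      = ∫⁻ y in Ioc 0 s, volume (Prod.mk y ⁻¹' E) := by
        refine setLIntegral_congr_fun measurableSet_Ioc fun y hy => ?_
        rw [hslice_y y hy, Real.volume_Ici_symmDiff_Ici]
    _ = (volume.restrict (Ioc 0 s)).prod volume E := (Measure.prod_apply hE).symm
    _ = ∫⁻ x, volume.restrict (Ioc 0 s) ((fun y => (y, x)) ⁻¹' E) := Measure.prod_apply_symm hE
    _ = ∫⁻ x, ENNReal.ofReal |cumMass A x - cumMass B x| := by
        refine lintegral_congr fun x => ?_
        rw [Measure.restrict_apply' measurableSet_Ioc, hslice_x, Real.volume_Iic_symmDiff_Iic]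

section Coupling

variable {π : ℝ × ℝ →₀ ℝ} {A B : ℝ →₀ ℝ}

lemma mem_support_of_marginal (proj : ℝ × ℝ → ℝ) (hπ0 : ∀ p, 0 ≤ π p)
    (hπA : ∀ x, ∑ p ∈ π.support.filter (fun p => proj p = x), π p = A x) {p : ℝ × ℝ}
    (hp : p ∈ π.support) : proj p ∈ A.support := by
  refine Finsupp.mem_support_iff.2 (ne_of_gt ?_)
  calc 0 < π p := (hπ0 p).lt_of_ne (Finsupp.mem_support_iff.1 hp).symm
    _ ≤ A (proj p) := hπA (proj p) ▸
      Finset.single_le_sum (fun q _ => hπ0 q) (Finset.mem_filter.2 ⟨hp, rfl⟩)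

lemma cumMass_eq_sum_indicator_of_marginal (proj : ℝ × ℝ → ℝ) (hπ0 : ∀ p, 0 ≤ π p)
    (hπA : ∀ x, ∑ p ∈ π.support.filter (fun p => proj p = x), π p = A x) (x : ℝ) :
    cumMass A x = ∑ p ∈ π.support, (Ici (proj p)).indicator (fun _ => π p) x := by
  have hfiber : ∀ a ∈ A.support.filter (· ≤ x),
      A a = ∑ p ∈ (π.support.filter (proj · ≤ x)).filter (proj · = a), π p := by
    intro a ha
    rw [← hπA a, Finset.filter_filter]
    refine Finset.sum_congr (Finset.filter_congr fun p _ => ?_) fun _ _ => rfl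
    exact ⟨fun h => ⟨h ▸ (Finset.mem_filter.1 ha).2, h⟩, And.right⟩
  rw [cumMass, Finset.sum_congr rfl hfiber, Finset.sum_fiberwise_of_maps_to fun p hp =>
    Finset.mem_filter.2 ⟨mem_support_of_marginal proj hπ0 hπA (Finset.mem_filter.1 hp).1,
      (Finset.mem_filter.1 hp).2⟩, Finset.sum_filter]
  simp only [indicator_apply, mem_Ici]

lemma lintegral_abs_cumMass_sub_le (hπ0 : ∀ p, 0 ≤ π p)
    (hπA : ∀ x, ∑ p ∈ π.support.filter (fun p => p.1 = x), π p = A x)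
    (hπB : ∀ y, ∑ p ∈ π.support.filter (fun p => p.2 = y), π p = B y) :
    ∫⁻ x, ENNReal.ofReal |cumMass A x - cumMass B x| ≤
      ENNReal.ofReal (∑ p ∈ π.support, π p * |p.1 - p.2|) := by
  have hpt : ∀ x, ENNReal.ofReal |cumMass A x - cumMass B x| ≤
      ∑ p ∈ π.support, (Ici p.1 ∆ Ici p.2).indicator (fun _ => ENNReal.ofReal (π p)) x := by
    intro x
    rw [cumMass_eq_sum_indicator_of_marginal Prod.fst hπ0 hπA,
      cumMass_eq_sum_indicator_of_marginal Prod.snd hπ0 hπB, ← Finset.sum_sub_distrib]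
    refine (ENNReal.ofReal_le_ofReal (Finset.abs_sum_le_sum_abs _ _)).trans_eq ?_
    rw [ENNReal.ofReal_sum_of_nonneg fun p _ => abs_nonneg _]
    refine Finset.sum_congr rfl fun p _ => ?_
    rw [← abs_indicator_symmDiff, abs_of_nonneg (indicator_nonneg (fun _ _ => hπ0 p) x)]
    exact (congrFun (indicator_comp_of_zero (g := ENNReal.ofReal) ENNReal.ofReal_zero) x).symm
  calc ∫⁻ x, ENNReal.ofReal |cumMass A x - cumMass B x|
      ≤ ∫⁻ x, ∑ p ∈ π.support, (Ici p.1 ∆ Ici p.2).indicator (fun _ => ENNReal.ofReal (π p)) x :=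
        lintegral_mono hpt
    _ = ∑ p ∈ π.support, ENNReal.ofReal (π p) * ENNReal.ofReal |p.1 - p.2| := by
        rw [lintegral_finsetSum _ fun p _ =>
          measurable_const.indicator (measurableSet_Ici.symmDiff measurableSet_Ici)]
        simp only [lintegral_indicator_const (measurableSet_Ici.symmDiff measurableSet_Ici),
          Real.volume_Ici_symmDiff_Ici]
    _ = ENNReal.ofReal (∑ p ∈ π.support, π p * |p.1 - p.2|) := by
        rw [ENNReal.ofReal_sum_of_nonneg fun p _ => mul_nonneg (hπ0 p) (abs_nonneg _)]
        simp only [ENNReal.ofReal_mul (hπ0 _)]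

lemma mul_sum_div_sum_self (h0 : ∀ x, 0 ≤ A x) (a : ℝ) :
    A a * (∑ z ∈ A.support, A z) / ∑ z ∈ A.support, A z = A a := by
  rcases eq_or_ne (∑ z ∈ A.support, A z) 0 with hs | hs
  · have ha : A a = 0 := by
      by_contra ha
      exact ha ((Finset.sum_eq_zero_iff_of_nonneg fun z _ => h0 z).1 hs a
        (Finsupp.mem_support_iff.2 ha))
    rw [ha, zero_mul, zero_div]
  · exact mul_div_cancel_right₀ _ hs

/-- The independent coupling `π(x, y) = A(x) B(y) / s`. -/
lemma exists_coupling (hA0 : ∀ x, 0 ≤ A x) (hB0 : ∀ x, 0 ≤ B x) {s : ℝ}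
    (hA : ∑ z ∈ A.support, A z = s) (hB : ∑ z ∈ B.support, B z = s) :
    ∃ π : ℝ × ℝ →₀ ℝ, (∀ p, 0 ≤ π p) ∧
      (∀ x, ∑ p ∈ π.support.filter (fun p => p.1 = x), π p = A x) ∧
      (∀ y, ∑ p ∈ π.support.filter (fun p => p.2 = y), π p = B y) := by
  let π : ℝ × ℝ →₀ ℝ := Finsupp.onFinset (A.support ×ˢ B.support) (fun p => A p.1 * B p.2 / s)
    fun p hp => by
      simp only [Finset.mem_product, Finsupp.mem_support_iff]
      constructor <;> rintro h <;> simp [h] at hp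
  have hsum : ∀ (P : ℝ × ℝ → Prop) [DecidablePred P], ∑ p ∈ π.support.filter P, π p =
      ∑ a ∈ A.support, ∑ b ∈ B.support, if P (a, b) then A a * B b / s else 0 := by
    intro P _
    rw [Finset.sum_subset (Finset.filter_subset_filter _ Finsupp.support_onFinset_subset)
      fun p _ hp => Finsupp.notMem_support_iff.1 fun h => hp (Finset.mem_filter.2
        ⟨h, (Finset.mem_filter.1 ‹_›).2⟩), Finset.sum_filter, Finset.sum_product]
    rfl
  refine ⟨π, fun p => div_nonneg (mul_nonneg (hA0 _) (hB0 _))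
    (hB ▸ Finset.sum_nonneg fun z _ => hB0 z), fun x => ?_, fun y => ?_⟩
  · calc _ = ∑ a ∈ A.support, if a = x then A a * s / s else 0 := by
          rw [hsum]
          refine Finset.sum_congr rfl fun a _ => ?_
          split_ifs <;> simp only [← Finset.sum_div, ← Finset.mul_sum, hB, Finset.sum_const_zero]
      _ = A x := by
          rw [Finset.sum_ite_eq', ← hA]
          split_ifs with hx
          · exact mul_sum_div_sum_self hA0 x
          · exact (Finsupp.notMem_support_iff.1 hx).symm
  · calc _ = ∑ b ∈ B.support, if b = y then B b * s / s else 0 := by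
          rw [hsum, Finset.sum_comm]
          refine Finset.sum_congr rfl fun b _ => ?_
          split_ifs <;> simp only [← Finset.sum_div, ← Finset.sum_mul, hA, mul_comm,
            Finset.sum_const_zero]
      _ = B y := by
          rw [Finset.sum_ite_eq', ← hB]
          split_ifs with hy
          · exact mul_sum_div_sum_self hB0 y
          · exact (Finsupp.notMem_support_iff.1 hy).symm

end Coupling

lemma transportCost_nonneg (A B : ℝ →₀ ℝ) : 0 ≤ transportCost A B :=
  Real.sInf_nonneg <| by
    rintro _ ⟨π, hπ0, -, -, rfl⟩
    exact Finset.sum_nonneg fun p _ => mul_nonneg (hπ0 p) (abs_nonneg _)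

lemma lintegral_abs_quantile_sub_le_transportCost {A B : ℝ →₀ ℝ} (hA0 : ∀ x, 0 ≤ A x)
    (hB0 : ∀ x, 0 ≤ B x) {s : ℝ} (hA : ∑ z ∈ A.support, A z = s)
    (hB : ∑ z ∈ B.support, B z = s) :
    ∫⁻ y in Ioc 0 s, ENNReal.ofReal |quantile A y - quantile B y| ≤
      ENNReal.ofReal (transportCost A B) := by
  rw [lintegral_abs_quantile_sub_eq hA0 hB0 hA hB]
  obtain ⟨π₀, hπ₀0, hπ₀A, hπ₀B⟩ := exists_coupling hA0 hB0 hA hB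
  have hfin : ∫⁻ x, ENNReal.ofReal |cumMass A x - cumMass B x| ≠ ⊤ :=
    ne_top_of_le_ne_top ENNReal.ofReal_ne_top (lintegral_abs_cumMass_sub_le hπ₀0 hπ₀A hπ₀B)
  rw [ENNReal.le_ofReal_iff_toReal_le hfin (transportCost_nonneg A B)]
  refine le_csInf ⟨_, π₀, hπ₀0, hπ₀A, hπ₀B, rfl⟩ ?_
  rintro _ ⟨π, hπ0, hπA, hπB, rfl⟩
  exact ENNReal.toReal_le_of_le_ofReal
    (Finset.sum_nonneg fun p _ => mul_nonneg (hπ0 p) (abs_nonneg _))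
    (lintegral_abs_cumMass_sub_le hπ0 hπA hπB)

lemma lintegral_Ioc_natCast_eq_sum (g : ℝ → ℝ≥0∞) (k : ℕ) :
    ∫⁻ y in Ioc 0 (k : ℝ), g y = ∑ j : Fin k, ∫⁻ ω in Ioc 0 1, g (ω + (j : ℕ)) := by
  induction k with
  | zero => simp
  | succ k ih =>
    rw [Fin.sum_univ_castSucc, Nat.cast_succ,
      ← Ioc_union_Ioc_eq_Ioc (Nat.cast_nonneg k) (le_add_of_nonneg_right zero_le_one),
      lintegral_union measurableSet_Ioc (Ioc_disjoint_Ioc_of_le le_rfl), ih]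
    simp only [Fin.val_castSucc, Fin.val_last]
    rw [(measurePreserving_add_right volume (k : ℝ)).setLIntegral_comp_emb
        (measurableEmbedding_addRight _) g, image_add_const_Ioc, zero_add, add_comm 1]

lemma exists_le_setLIntegral_Ioc_zero_one {f : ℝ → ℝ≥0∞}
    (hf : AEMeasurable f (volume.restrict (Ioc 0 1))) :
    ∃ ω ∈ Ioc (0 : ℝ) 1, f ω ≤ ∫⁻ x in Ioc 0 1, f x := by
  have hvol : volume (Ioc (0 : ℝ) 1) = 1 := by simp [Real.volume_Ioc]
  simpa only [setLAverage_eq, hvol, div_one] using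
    exists_le_setLAverage (hvol ▸ one_ne_zero) (hvol ▸ ENNReal.one_ne_top) hf

lemma matchDistR_nonneg {k : ℕ} (a b : Fin k → ℝ) : 0 ≤ matchDistR a b :=
  le_ciInf fun _ => Finset.sum_nonneg fun _ _ => abs_nonneg _

lemma matchDistR_le_sum_abs_sub {k : ℕ} (a b : Fin k → ℝ) :
    matchDistR a b ≤ ∑ j, |a j - b j| :=
  ciInf_le (Set.finite_range _).bddBelow (1 : Equiv.Perm (Fin k))

noncomputable def indexMatchCost (k : ℕ) (A B : ℝ →₀ ℝ) (ω : ℝ) : ℝ≥0∞ :=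
  ∑ j : Fin k, ENNReal.ofReal |roundCfg k A ω j - roundCfg k B ω j|

lemma ofReal_matchDistR_le_indexMatchCost (k : ℕ) (A B : ℝ →₀ ℝ) (ω : ℝ) :
    ENNReal.ofReal (matchDistR (roundCfg k A ω) (roundCfg k B ω)) ≤ indexMatchCost k A B ω :=
  (ENNReal.ofReal_le_ofReal (matchDistR_le_sum_abs_sub _ _)).trans_eq
    (ENNReal.ofReal_sum_of_nonneg fun _ _ => abs_nonneg _)

lemma aemeasurable_roundCfg_apply {μ : ℝ →₀ ℝ} (h0 : ∀ x, 0 ≤ μ x) {k : ℕ}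
    (hm : ∑ z ∈ μ.support, μ z = k) (j : Fin k) :
    AEMeasurable (fun ω => roundCfg k μ ω j) (volume.restrict (Ioc 0 1)) := by
  have hj : ((j : ℕ) : ℝ) + 1 ≤ k := by exact_mod_cast j.isLt
  have hmem : ∀ ω ∈ Ioc (0 : ℝ) 1, ω + (j : ℕ) ∈ Ioc 0 (∑ z ∈ μ.support, μ z) := fun ω hω =>
    ⟨add_pos_of_pos_of_nonneg hω.1 (Nat.cast_nonneg _), by linarith [hω.2]⟩
  exact aemeasurable_restrict_of_monotoneOn measurableSet_Ioc fun ω hω ω' hω' h =>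
    quantile_monotoneOn h0 (hmem ω hω) (hmem ω' hω') (by linarith)

lemma aemeasurable_ofReal_abs_roundCfg_sub {A B : ℝ →₀ ℝ} (hA0 : ∀ x, 0 ≤ A x)
    (hB0 : ∀ x, 0 ≤ B x) {k : ℕ} (hA : ∑ z ∈ A.support, A z = k)
    (hB : ∑ z ∈ B.support, B z = k) (j : Fin k) :
    AEMeasurable (fun ω => ENNReal.ofReal |roundCfg k A ω j - roundCfg k B ω j|)
      (volume.restrict (Ioc 0 1)) :=
  ((aemeasurable_roundCfg_apply hA0 hA j).sub
    (aemeasurable_roundCfg_apply hB0 hB j)).abs.ennreal_ofReal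

lemma aemeasurable_indexMatchCost {A B : ℝ →₀ ℝ} (hA0 : ∀ x, 0 ≤ A x) (hB0 : ∀ x, 0 ≤ B x)
    {k : ℕ} (hA : ∑ z ∈ A.support, A z = k) (hB : ∑ z ∈ B.support, B z = k) :
    AEMeasurable (indexMatchCost k A B) (volume.restrict (Ioc 0 1)) :=
  Finset.aemeasurable_fun_sum _ fun j _ => aemeasurable_ofReal_abs_roundCfg_sub hA0 hB0 hA hB j

lemma lintegral_indexMatchCost_le_transportCost {A B : ℝ →₀ ℝ} (hA0 : ∀ x, 0 ≤ A x)
    (hB0 : ∀ x, 0 ≤ B x) {k : ℕ} (hA : ∑ z ∈ A.support, A z = k)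
    (hB : ∑ z ∈ B.support, B z = k) :
    ∫⁻ ω in Ioc 0 1, indexMatchCost k A B ω ≤ ENNReal.ofReal (transportCost A B) := by
  calc ∫⁻ ω in Ioc 0 1, indexMatchCost k A B ω
      = ∑ j : Fin k, ∫⁻ ω in Ioc 0 1, ENNReal.ofReal |roundCfg k A ω j - roundCfg k B ω j| :=
        lintegral_finsetSum' _ fun j _ => aemeasurable_ofReal_abs_roundCfg_sub hA0 hB0 hA hB j
    _ = ∫⁻ y in Ioc 0 (k : ℝ), ENNReal.ofReal |quantile A y - quantile B y| :=
        (lintegral_Ioc_natCast_eq_sum (fun y => ENNReal.ofReal |quantile A y - quantile B y|)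
          k).symm
    _ ≤ ENNReal.ofReal (transportCost A B) :=
        lintegral_abs_quantile_sub_le_transportCost hA0 hB0 hA hB

theorem exists_omega_rounded_serves_and_cost_le_general {k t : ℕ}
    (μ : Fin (t + 1) → ℝ →₀ ℝ)
    (hμ0 : ∀ i, ∀ x, 0 ≤ μ i x) (hμk : ∀ i, ∑ x ∈ (μ i).support, μ i x = k)
    (r : Fin t → ℝ) (hr : ∀ i : Fin t, 1 ≤ μ i.succ (r i)) :
    ∃ ω ∈ Set.Ioc (0 : ℝ) 1,
      (∀ i : Fin t, ∃ j : Fin k, quantile (μ i.succ) (ω + (j : ℕ)) = r i) ∧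
      ∑ i : Fin t, matchDistR (roundCfg k (μ i.castSucc) ω) (roundCfg k (μ i.succ) ω) ≤
        ∑ i : Fin t, transportCost (μ i.castSucc) (μ i.succ) := by
  have hmeas : ∀ i : Fin t, AEMeasurable (indexMatchCost k (μ i.castSucc) (μ i.succ))
      (volume.restrict (Ioc 0 1)) := fun i =>
    aemeasurable_indexMatchCost (hμ0 _) (hμ0 _) (hμk _) (hμk _)
  obtain ⟨ω, hω, hle⟩ := exists_le_setLIntegral_Ioc_zero_one
    (Finset.aemeasurable_fun_sum Finset.univ fun i _ => hmeas i)
  refine ⟨ω, hω, fun i => exists_quantile_add_natCast_eq (hμ0 _) (hμk _) (hr i) hω, ?_⟩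
  rw [← ENNReal.ofReal_le_ofReal_iff (Finset.sum_nonneg fun i _ => transportCost_nonneg _ _),
    ENNReal.ofReal_sum_of_nonneg fun i _ => matchDistR_nonneg _ _,
    ENNReal.ofReal_sum_of_nonneg fun i _ => transportCost_nonneg _ _]
  calc ∑ i : Fin t, ENNReal.ofReal
        (matchDistR (roundCfg k (μ i.castSucc) ω) (roundCfg k (μ i.succ) ω))
      ≤ ∑ i : Fin t, indexMatchCost k (μ i.castSucc) (μ i.succ) ω :=
        Finset.sum_le_sum fun i _ => ofReal_matchDistR_le_indexMatchCost _ _ _ _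
    _ ≤ ∫⁻ x in Ioc 0 1, ∑ i : Fin t, indexMatchCost k (μ i.castSucc) (μ i.succ) x := hle
    _ = ∑ i : Fin t, ∫⁻ x in Ioc 0 1, indexMatchCost k (μ i.castSucc) (μ i.succ) x :=
        lintegral_finsetSum' _ fun i _ => hmeas i
    _ ≤ ∑ i : Fin t, ENNReal.ofReal (transportCost (μ i.castSucc) (μ i.succ)) :=
        Finset.sum_le_sum fun i _ =>
          lintegral_indexMatchCost_le_transportCost (hμ0 _) (hμ0 _) (hμk _) (hμk _)

/-- for fractional configurations `μ_0, …, μ_t` of mass `k` on the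
line with `μ_i(r_i) ≥ 1`, there exists `ω ∈ (0, 1]` such that every rounded
configuration `I_ω(μ_i)` contains a server at `r_i` and the total movement of
the rounded configurations is at most the fractional movement cost. -/
theorem exists_omega_rounded_serves_and_cost_le {k t : ℕ} (hk : 1 ≤ k)
    (μ : Fin (t + 1) → ℝ →₀ ℝ)
    (hμ0 : ∀ i, ∀ x, 0 ≤ μ i x) (hμk : ∀ i, ∑ x ∈ (μ i).support, μ i x = k)
    (r : Fin t → ℝ) (hr : ∀ i : Fin t, 1 ≤ μ i.succ (r i)) :
    ∃ ω ∈ Set.Ioc (0 : ℝ) 1,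
      (∀ i : Fin t, ∃ j : Fin k, quantile (μ i.succ) (ω + (j : ℕ)) = r i) ∧
      ∑ i : Fin t, matchDistR (roundCfg k (μ i.castSucc) ω) (roundCfg k (μ i.succ) ω) ≤
        ∑ i : Fin t, transportCost (μ i.castSucc) (μ i.succ) :=
  exists_omega_rounded_serves_and_cost_le_general μ hμ0 hμk r hr
end
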